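/- arXiv:1705.09385 — 2 statements merged into one kernel-verified Lean document; each statement's English description precedes it below -/
import Mathlib

section
/- Let J_k be the graph obtained by taking one-sums of k copies of the 4-cycle C_4, identifying antipodal vertices so that the copies form a chain: in copy i, a_i and b_i are antipodal, and b_i is identified with a_{i+1} for i = 1,…,k−1. Then S(J_k, a_1, b_k) is isomorphic to the k-dimensional hypercube Q_k. -/
open SimpleGraph

/-- The type of `a,b`-geodesics in `G`: paths from `a` to `b` of length `d_G(a,b)`. -/
def Geodesic {V : Type*} (G : SimpleGraph V) (a b : V) : Type _ :=
  {p : G.Walk a b // p.IsPath ∧ p.length = G.dist a b}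

/-- Two geodesics differ at exactly the index `i` (comparing vertex sequences). -/
def DiffAt {V : Type*} {G : SimpleGraph V} {a b : V} (U W : Geodesic G a b) (i : ℕ) : Prop :=
  U.1.support.getD i a ≠ W.1.support.getD i a ∧
    ∀ j, j ≠ i → U.1.support.getD j a = W.1.support.getD j a

/-- The shortest path graph `S(G,a,b)`: vertices are `a,b`-geodesics, adjacent iff their
vertex sequences differ in exactly one position. -/
def SPG {V : Type*} (G : SimpleGraph V) (a b : V) : SimpleGraph (Geodesic G a b) where
  Adj U W := ∃ i, DiffAt U W i
  symm := by
    constructor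
    rintro U W ⟨i, hne, hj⟩
    exact ⟨i, hne.symm, fun j hji => (hj j hji).symm⟩
  loopless := by
    constructor
    rintro U ⟨i, hne, -⟩
    exact hne rfl

/-- A graph is a shortest path graph if it is isomorphic to `S(G,a,b)` for some `G`, `a ≠ b`. -/
def IsSPGraph {α : Type*} (H : SimpleGraph α) : Prop :=
  ∃ (V : Type) (G : SimpleGraph V) (a b : V), a ≠ b ∧ Nonempty (H ≃g SPG G a b)

/-- The hypercube graph `Q_m` on binary strings of length `m`. -/
def hypercube (m : ℕ) : SimpleGraph (Fin m → Bool) where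
  Adj x y := ∃! i, x i ≠ y i
  symm := by
    constructor
    rintro x y ⟨i, hi, hu⟩
    exact ⟨i, Ne.symm hi, fun j hj => hu j (Ne.symm hj)⟩
  loopless := by
    constructor
    rintro x ⟨i, hi, -⟩
    exact hi rfl

/-- The chain `J_k` of `k` four-cycles: the `i`-th copy of `C₄` has antipodal vertices
`Sum.inl i` and `Sum.inl (i+1)` and middle vertices `Sum.inr (i, s)` for `s : Bool`,
consecutive copies sharing one antipodal vertex. -/
def Jgraph (k : ℕ) : SimpleGraph (Fin (k + 1) ⊕ (Fin k × Bool)) :=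
  SimpleGraph.fromRel (fun u v =>
    match u, v with
    | Sum.inl j, Sum.inr (i, _) => j.val = i.val ∨ j.val = i.val + 1
    | _, _ => False)

/-! Rank the vertices of `J_k` by `a_j ↦ 2j` and `(middle vertex of copy i) ↦ 2i + 1`. Ranks
change by one along edges, so an `a_1,b_k`-walk has length at least `2k`, and one of length
exactly `2k` is at rank `t` at time `t`. A geodesic is therefore the same as a choice of one of the
two middle vertices in every copy, i.e. a binary string of length `k`, and the vertex sequences of
two geodesics differ in exactly one position iff their strings differ in exactly one bit. -/

theorem Function.Injective.existsUnique_iff {α β : Type*} {e : α → β} (he : e.Injective)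
    {p : α → Prop} {q : β → Prop} (h : ∀ b, q b ↔ ∃ a, e a = b ∧ p a) :
    (∃! b, q b) ↔ ∃! a, p a := by
  constructor
  · rintro ⟨b, hb, huniq⟩
    obtain ⟨a, rfl, ha⟩ := (h b).mp hb
    exact ⟨a, ha, fun a' ha' => he (huniq _ ((h _).mpr ⟨a', rfl, ha'⟩))⟩
  · rintro ⟨a, ha, huniq⟩
    refine ⟨e a, (h _).mpr ⟨a, rfl, ha⟩, fun b hb => ?_⟩
    obtain ⟨a', rfl, ha'⟩ := (h b).mp hb
    rw [huniq a' ha']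

namespace SimpleGraph

variable {V : Type*} {G : SimpleGraph V}

namespace Walk

variable {u v : V}

def ofSeq (x : ℕ → V) : (n : ℕ) → (∀ i < n, G.Adj (x i) (x (i + 1))) → G.Walk (x 0) (x n)
  | 0, _ => nil
  | n + 1, h => (ofSeq x n fun i hi => h i (by omega)).concat (h n n.lt_add_one)

@[simp]
lemma length_ofSeq (x : ℕ → V) (n : ℕ) (h : ∀ i < n, G.Adj (x i) (x (i + 1))) :
    (ofSeq x n h).length = n := by
  induction n with
  | zero => rfl
  | succ n ih => simp [ofSeq, ih]

lemma getVert_ofSeq (x : ℕ → V) (n : ℕ) (h : ∀ i < n, G.Adj (x i) (x (i + 1))) {i : ℕ}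
    (hi : i ≤ n) : (ofSeq x n h).getVert i = x i := by
  induction n with
  | zero => simp [ofSeq, Nat.le_zero.mp hi]
  | succ n ih =>
    rcases Nat.lt_or_eq_of_le hi with hi | rfl
    · rw [ofSeq, concat_eq_append, getVert_append', length_ofSeq, if_pos (by omega),
        ih _ (by omega)]
    · simpa using (ofSeq x (n + 1) h).getVert_length

lemma support_getD_of_le (p : G.Walk u v) (d : V) {t : ℕ} (ht : t ≤ p.length) :
    p.support.getD t d = p.getVert t := by
  rw [getVert_eq_support_getElem p ht, List.getD_eq_getElem]

lemma support_getD_of_lt (p : G.Walk u v) (d : V) {t : ℕ} (ht : p.length < t) :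
    p.support.getD t d = d :=
  List.getD_eq_default _ _ (by rw [length_support]; omega)

lemma support_getD_eq_iff {p q : G.Walk u v} (hl : p.length = q.length) (d : V) (t : ℕ) :
    p.support.getD t d = q.support.getD t d ↔ p.getVert t = q.getVert t := by
  rcases le_or_gt t p.length with ht | ht
  · rw [support_getD_of_le p d ht, support_getD_of_le q d (hl ▸ ht)]
  · rw [support_getD_of_lt p d ht, support_getD_of_lt q d (hl ▸ ht),
      getVert_of_length_le p ht.le, getVert_of_length_le q (hl ▸ ht.le)]
    simp only

section Height

variable {r : V → ℕ}

lemma apply_getVert_le_add (hr : ∀ ⦃x y⦄, G.Adj x y → r y ≤ r x + 1) (p : G.Walk u v)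
    {i j : ℕ} (hij : i ≤ j) : r (p.getVert j) ≤ r (p.getVert i) + (j - i) := by
  induction j, hij using Nat.le_induction with
  | base => simp
  | succ j hij ih =>
    have step : r (p.getVert (j + 1)) ≤ r (p.getVert j) + 1 := by
      rcases lt_or_ge j p.length with hj | hj
      · exact hr (p.adj_getVert_succ hj)
      · rw [p.getVert_of_length_le hj, p.getVert_of_length_le (by omega)]
        omega
    omega

lemma apply_le_apply_add_length (hr : ∀ ⦃x y⦄, G.Adj x y → r y ≤ r x + 1)
    (p : G.Walk u v) : r v ≤ r u + p.length := by
  simpa using p.apply_getVert_le_add hr (Nat.zero_le p.length)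

lemma apply_getVert_of_apply_eq_add_length (hr : ∀ ⦃x y⦄, G.Adj x y → r y ≤ r x + 1)
    {p : G.Walk u v} (hp : r v = r u + p.length) {t : ℕ} (ht : t ≤ p.length) :
    r (p.getVert t) = r u + t := by
  have h₁ := p.apply_getVert_le_add hr (Nat.zero_le t)
  have h₂ := p.apply_getVert_le_add hr ht
  simp only [getVert_zero, getVert_length] at h₁ h₂
  omega

lemma isPath_of_apply_eq_add_length (hr : ∀ ⦃x y⦄, G.Adj x y → r y ≤ r x + 1)
    {p : G.Walk u v} (hp : r v = r u + p.length) : p.IsPath := by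
  refine (IsPath.getVert_injOn_iff p).mp fun i hi j hj hij => ?_
  have h := congrArg r hij
  rw [apply_getVert_of_apply_eq_add_length hr hp hi,
    apply_getVert_of_apply_eq_add_length hr hp hj] at h
  omega

end Height

end Walk

lemma SPG_adj_iff {a b : V} (U W : Geodesic G a b) :
    (SPG G a b).Adj U W ↔ ∃! i, U.1.getVert i ≠ W.1.getVert i := by
  have hl : U.1.length = W.1.length := U.2.2.trans W.2.2.symm
  change (∃ i, DiffAt U W i) ↔ _
  simp only [DiffAt, ExistsUnique, ne_eq, Walk.support_getD_eq_iff hl]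
  refine exists_congr fun i => and_congr_right fun _ => forall_congr' fun j => ?_
  tauto

end SimpleGraph

namespace Jgraph

variable {k : ℕ}

def rank : Fin (k + 1) ⊕ (Fin k × Bool) → ℕ
  | .inl j => 2 * j
  | .inr (i, _) => 2 * i + 1

lemma rank_le_of_adj ⦃u v : Fin (k + 1) ⊕ (Fin k × Bool)⦄ (h : (Jgraph k).Adj u v) :
    rank v ≤ rank u + 1 := by
  rw [Jgraph, fromRel_adj] at h
  rcases u with j | ⟨i, s⟩ <;> rcases v with j' | ⟨i', s'⟩ <;> simp_all [rank] <;> omega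

lemma adj_inl_inr {j : Fin (k + 1)} {i : Fin k} (s : Bool) (h : (j : ℕ) = i ∨ (j : ℕ) = i + 1) :
    (Jgraph k).Adj (.inl j) (.inr (i, s)) := by
  rw [Jgraph, fromRel_adj]
  exact ⟨by simp, .inl h⟩

/-- The geodesic through the middle vertex `Sum.inr (i, f i)` of every copy, as a vertex
sequence; it stays at the endpoint after time `2k`. -/
def seq (f : Fin k → Bool) (t : ℕ) : Fin (k + 1) ⊕ (Fin k × Bool) :=
  if h : t / 2 < k then
    if t % 2 = 0 then .inl ⟨t / 2, by omega⟩ else .inr (⟨t / 2, h⟩, f ⟨t / 2, h⟩)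
  else .inl (Fin.last k)

lemma seq_zero (f : Fin k → Bool) : seq f 0 = .inl 0 := by
  unfold seq
  split_ifs <;> first | rfl | simp_all

lemma seq_two_mul (f : Fin k → Bool) : seq f (2 * k) = .inl (Fin.last k) := by
  simp [seq]

lemma seq_of_le {f : Fin k → Bool} {t : ℕ} (ht : 2 * k ≤ t) : seq f t = .inl (Fin.last k) := by
  rw [seq, dif_neg (by omega)]

lemma seq_two_mul_add_one (f : Fin k → Bool) (i : Fin k) : seq f (2 * i + 1) = .inr (i, f i) := by
  have h : (2 * i.val + 1) / 2 = i := by omega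
  simp [seq, h]

lemma seq_two_mul_of_le (f : Fin k → Bool) {m : ℕ} (hm : m ≤ k) :
    seq f (2 * m) = .inl ⟨m, by omega⟩ := by
  rcases Nat.lt_or_eq_of_le hm with hm | rfl
  · simp [seq, hm]
  · exact seq_two_mul f

lemma adj_seq (f : Fin k → Bool) {t : ℕ} (ht : t < 2 * k) :
    (Jgraph k).Adj (seq f t) (seq f (t + 1)) := by
  obtain ⟨m, rfl | rfl⟩ := Nat.even_or_odd' t
  · rw [seq_two_mul_of_le f (by omega), show 2 * m = 2 * (⟨m, by omega⟩ : Fin k) from rfl,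
      seq_two_mul_add_one]
    exact adj_inl_inr _ (.inl rfl)
  · rw [show 2 * m + 1 + 1 = 2 * (m + 1) by ring, seq_two_mul_of_le f (by omega),
      show 2 * m + 1 = 2 * (⟨m, by omega⟩ : Fin k) + 1 from rfl, seq_two_mul_add_one]
    exact (adj_inl_inr _ (.inr rfl)).symm

lemma seq_ne_seq_iff {f g : Fin k → Bool} {t : ℕ} :
    seq f t ≠ seq g t ↔ ∃ i : Fin k, 2 * (i : ℕ) + 1 = t ∧ f i ≠ g i := by
  constructor
  · intro h
    by_contra! hfg
    refine h ?_
    unfold seq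
    split_ifs with hk ht
    · rfl
    · rw [hfg ⟨t / 2, hk⟩ (by simp only; omega)]
    · rfl
  · rintro ⟨i, rfl, hi⟩
    simpa [seq_two_mul_add_one] using hi

def bit : Fin (k + 1) ⊕ (Fin k × Bool) → Bool :=
  Sum.elim (fun _ => false) Prod.snd

def bits {u v : Fin (k + 1) ⊕ (Fin k × Bool)} (p : (Jgraph k).Walk u v) (i : Fin k) : Bool :=
  bit (p.getVert (2 * i + 1))

lemma eq_seq_of_rank_eq {f : Fin k → Bool} {v : Fin (k + 1) ⊕ (Fin k × Bool)} {t : ℕ}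
    (hv : rank v = t) (hf : ∀ i s, v = .inr (i, s) → f i = s) : v = seq f t := by
  subst hv
  rcases v with j | ⟨i, s⟩
  · exact (seq_two_mul_of_le f j.is_le).symm
  · rw [rank, seq_two_mul_add_one, hf i s rfl]

lemma getVert_eq_seq {p : (Jgraph k).Walk (.inl 0) (.inl (Fin.last k))} (hp : p.length = 2 * k)
    (t : ℕ) : p.getVert t = seq (bits p) t := by
  rcases le_or_gt t (2 * k) with ht | ht
  · have hr : rank (p.getVert t) = t := by
      simpa [rank] using Walk.apply_getVert_of_apply_eq_add_length rank_le_of_adj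
        (p := p) (by simp [rank, hp]) (hp ▸ ht)
    refine eq_seq_of_rank_eq hr fun i s hv => ?_
    have hi : 2 * (i : ℕ) + 1 = t := by rw [← hr, hv, rank]
    rw [bits, hi, hv, bit, Sum.elim_inr]
  · rw [p.getVert_of_length_le (by omega), seq_of_le ht.le]

def walk (f : Fin k → Bool) : (Jgraph k).Walk (.inl 0) (.inl (Fin.last k)) :=
  (Walk.ofSeq (seq f) (2 * k) fun _ => adj_seq f).copy (seq_zero f) (seq_two_mul f)

@[simp]
lemma length_walk (f : Fin k → Bool) : (walk f).length = 2 * k := by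
  simp [walk]

lemma bits_walk (f : Fin k → Bool) : bits (walk f) = f := by
  funext i
  rw [bits, walk, Walk.getVert_copy, Walk.getVert_ofSeq _ _ _ (by omega), seq_two_mul_add_one]
  rfl

lemma dist_inl_zero_inl_last : (Jgraph k).dist (.inl 0) (.inl (Fin.last k)) = 2 * k := by
  refine le_antisymm ((dist_le (walk fun _ => false)).trans_eq (length_walk _)) ?_
  obtain ⟨p, hp⟩ := Reachable.exists_walk_length_eq_dist ⟨walk fun _ => false⟩
  rw [← hp]
  simpa [rank] using p.apply_le_apply_add_length rank_le_of_adj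

lemma length_val (U : Geodesic (Jgraph k) (.inl 0) (.inl (Fin.last k))) : U.1.length = 2 * k :=
  U.2.2.trans dist_inl_zero_inl_last

def geodesic (f : Fin k → Bool) : Geodesic (Jgraph k) (.inl 0) (.inl (Fin.last k)) :=
  ⟨walk f, Walk.isPath_of_apply_eq_add_length rank_le_of_adj (by simp [rank]),
    by rw [length_walk, dist_inl_zero_inl_last]⟩

def geodesicEquiv : Geodesic (Jgraph k) (.inl 0) (.inl (Fin.last k)) ≃ (Fin k → Bool) where
  toFun U := bits U.1
  invFun := geodesic
  left_inv U := Subtype.ext <| Walk.ext_getVert fun t => by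
    rw [geodesic, getVert_eq_seq (length_walk _), bits_walk, getVert_eq_seq (length_val U)]
  right_inv f := bits_walk f

lemma SPG_adj_iff_hypercube_adj (U W : Geodesic (Jgraph k) (.inl 0) (.inl (Fin.last k))) :
    (SPG (Jgraph k) (.inl 0) (.inl (Fin.last k))).Adj U W ↔
      (hypercube k).Adj (bits U.1) (bits W.1) := by
  simp only [SPG_adj_iff, getVert_eq_seq (length_val U), getVert_eq_seq (length_val W)]
  have hinj : Function.Injective fun i : Fin k => 2 * (i : ℕ) + 1 := fun i j h =>
    Fin.ext (by simp only at h; omega)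
  exact hinj.existsUnique_iff fun _ => seq_ne_seq_iff

end Jgraph

theorem stmt9_general (k : ℕ) :
    Nonempty (SPG (Jgraph k) (Sum.inl 0) (Sum.inl (Fin.last k)) ≃g hypercube k) :=
  ⟨⟨Jgraph.geodesicEquiv, fun {U W} => (Jgraph.SPG_adj_iff_hypercube_adj U W).symm⟩⟩

theorem stmt9 (k : ℕ) (hk : 1 ≤ k) :
    Nonempty (SPG (Jgraph k) (Sum.inl 0) (Sum.inl (Fin.last k)) ≃g hypercube k) :=
  stmt9_general k
end

section
/- If a tree H is a shortest path graph, then H is a path. -/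
open SimpleGraph

/-!
In `S(G,a,b)`, two neighbours `W`, `X` of a geodesic `U` that differ from it at the same position
differ from each other only there, which gives a triangle. If they differ from `U` at positions
`i + 2 ≤ k`, the geodesic that follows `W` up to position `i + 1` and `X` afterwards is a second
common neighbour of `W` and `X`, which gives a four-cycle. In a tree neither happens, so the
positions belonging to the neighbours of `U` are pairwise consecutive, and `U` has at most two
neighbours. A finite tree of maximum degree two is a path: a longest path cannot be extended at its
ends and its inner vertices have no room for further neighbours, so it passes through every vertex,
and by acyclicity it contains every edge.
-/

namespace SimpleGraph

variable {V : Type*} {G : SimpleGraph V}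

/-- Maximum degree at most two, phrased without cardinalities since neighbour sets in `S(G,a,b)`
may be infinite. -/
def DegreeLeTwo (G : SimpleGraph V) : Prop :=
  ∀ ⦃c w x z : V⦄, G.Adj c w → G.Adj c x → G.Adj c z → w = x ∨ w = z ∨ x = z

theorem DegreeLeTwo.of_embedding {V' : Type*} {G' : SimpleGraph V'} (h : G'.DegreeLeTwo)
    (f : G ↪g G') : G.DegreeLeTwo := by
  intro c w x z hw hx hz
  simpa only [f.injective.eq_iff] using h (f.map_adj_iff.mpr hw) (f.map_adj_iff.mpr hx)
    (f.map_adj_iff.mpr hz)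

theorem IsAcyclic.not_adj_of_adj_of_adj (hG : G.IsAcyclic) {c p q : V} (hp : G.Adj c p)
    (hq : G.Adj c q) : ¬G.Adj p q := by
  intro hpq
  have hpath : (Walk.cons hp (Walk.cons hpq Walk.nil)).IsPath := by
    simp [Walk.isPath_def, hp.ne, hq.ne, hpq.ne]
  have := congrArg (fun P : G.Path c q => P.1.length)
    ((hG.subsingleton_path c q).elim ⟨_, hpath⟩ (Path.singleton hq))
  simp at this

theorem IsAcyclic.eq_of_adj_of_adj (hG : G.IsAcyclic) {c y p q : V} (hpq : p ≠ q)
    (hcp : G.Adj c p) (hcq : G.Adj c q) (hyp : G.Adj y p) (hyq : G.Adj y q) : c = y := by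
  have hc : (Walk.cons hcp.symm (Walk.cons hcq Walk.nil)).IsPath := by
    simp [Walk.isPath_def, hcp.ne', hpq, hcq.ne]
  have hy : (Walk.cons hyp.symm (Walk.cons hyq Walk.nil)).IsPath := by
    simp [Walk.isPath_def, hyp.ne', hpq, hyq.ne]
  have := congrArg (fun P : G.Path p q => P.1.support)
    ((hG.subsingleton_path p q).elim ⟨_, hc⟩ ⟨_, hy⟩)
  simpa using this

theorem IsAcyclic.mem_edges_of_mem_support (hG : G.IsAcyclic) {u v x y : V} (P : G.Walk u v)
    (hx : x ∈ P.support) (hy : y ∈ P.support) (h : G.Adj x y) : s(x, y) ∈ P.edges := by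
  classical
  have hbridge := isBridge_iff_forall_walk_mem_edges.mp (isAcyclic_iff_forall_adj_isBridge.mp hG h)
    ((P.takeUntil x hx).reverse.append (P.takeUntil y hy))
  rw [Walk.edges_append, Walk.edges_reverse, List.mem_append, List.mem_reverse] at hbridge
  exact hbridge.elim (P.edges_takeUntil_subset_edges hx ·) (P.edges_takeUntil_subset_edges hy ·)

theorem Preconnected.mem_of_forall_adj (hG : G.Preconnected) {s : Set V} {u : V} (hu : u ∈ s)
    (hs : ∀ ⦃x y⦄, x ∈ s → G.Adj x y → y ∈ s) (v : V) : v ∈ s := by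
  obtain ⟨w⟩ := hG u v
  induction w with
  | nil => exact hu
  | cons h _ ih => exact ih (hs hu h)

theorem Walk.exists_getVert_eq_ite {u v : V} {p q : G.Walk u v} {n : ℕ} (hn : n ≤ p.length)
    (h : p.getVert n = q.getVert n) :
    ∃ r : G.Walk u v, r.length = n + (q.length - n) ∧
      ∀ m, r.getVert m = if m ≤ n then p.getVert m else q.getVert m := by
  refine ⟨(p.take n).append ((q.drop n).copy h.symm rfl), by simp [hn], fun m => ?_⟩
  simp only [Walk.getVert_append', Walk.take_length, Walk.take_getVert, Walk.getVert_copy,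
    Walk.drop_getVert, min_eq_left hn]
  split_ifs with hm
  · rw [min_eq_right hm]
  · congr 1; omega

end SimpleGraph

namespace Geodesic

variable {V : Type*} {G : SimpleGraph V} {a b : V}

/-- Lets `DiffAt` be read through `Walk.getVert`: past position `d(a,b)` the default of `getD` is
`a` while `getVert` returns `b`, but on both sides the two geodesics agree there. -/
theorem support_getD_eq_iff (U W : Geodesic G a b) (j : ℕ) :
    U.1.support.getD j a = W.1.support.getD j a ↔ U.1.getVert j = W.1.getVert j := by
  by_cases hj : j ≤ G.dist a b
  · rw [List.getD_eq_getElem _ _ (by simp [U.2.2]; omega),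
      List.getD_eq_getElem _ _ (by simp [W.2.2]; omega),
      U.1.getVert_eq_support_getElem (by rw [U.2.2]; exact hj),
      W.1.getVert_eq_support_getElem (by rw [W.2.2]; exact hj)]
  · rw [List.getD_eq_default _ _ (by simp [U.2.2]; omega),
      List.getD_eq_default _ _ (by simp [W.2.2]; omega),
      U.1.getVert_of_length_le (by rw [U.2.2]; omega),
      W.1.getVert_of_length_le (by rw [W.2.2]; omega)]
    exact iff_of_true rfl rfl

theorem ext {U W : Geodesic G a b} (h : ∀ j, U.1.getVert j = W.1.getVert j) : U = W :=
  Subtype.ext (Walk.ext_getVert h)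

end Geodesic

theorem diffAt_iff {V : Type*} {G : SimpleGraph V} {a b : V} {U W : Geodesic G a b} {i : ℕ} :
    DiffAt U W i ↔
      U.1.getVert i ≠ W.1.getVert i ∧ ∀ j, j ≠ i → U.1.getVert j = W.1.getVert j := by
  simp only [DiffAt, ne_eq, Geodesic.support_getD_eq_iff]

namespace DiffAt

variable {V : Type*} {G : SimpleGraph V} {a b : V}

theorem le_dist {U W : Geodesic G a b} {i : ℕ} (h : DiffAt U W i) : i ≤ G.dist a b := by
  by_contra hi
  refine (diffAt_iff.mp h).1 ?_
  rw [U.1.getVert_of_length_le (by rw [U.2.2]; omega),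
    W.1.getVert_of_length_le (by rw [W.2.2]; omega)]

theorem diffAt_of_ne {U W X : Geodesic G a b} {i : ℕ} (hW : DiffAt U W i)
    (hX : DiffAt U X i) (hne : W ≠ X) : DiffAt W X i := by
  rw [diffAt_iff] at *
  have hoff : ∀ j, j ≠ i → W.1.getVert j = X.1.getVert j := fun j hj =>
    (hW.2 j hj).symm.trans (hX.2 j hj)
  refine ⟨fun hi => hne (Geodesic.ext fun j => ?_), hoff⟩
  by_cases hj : j = i
  · exact hj ▸ hi
  · exact hoff j hj

theorem exists_diffAt_diffAt_of_add_two_le {U W X : Geodesic G a b} {i k : ℕ}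
    (hW : DiffAt U W i) (hX : DiffAt U X k) (hik : i + 2 ≤ k) :
    ∃ Y : Geodesic G a b, DiffAt Y W k ∧ DiffAt Y X i ∧ Y ≠ U := by
  have hk := hX.le_dist
  rw [diffAt_iff] at hW hX
  have hWX : W.1.getVert (i + 1) = X.1.getVert (i + 1) :=
    (hW.2 _ (by omega)).symm.trans (hX.2 _ (by omega))
  obtain ⟨r, hlen, hr⟩ := Walk.exists_getVert_eq_ite (by rw [W.2.2]; omega) hWX
  have hr' : r.length = G.dist a b := by rw [hlen, X.2.2]; omega
  let Y : Geodesic G a b := ⟨r, r.isPath_of_length_eq_dist hr', hr'⟩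
  have hYW : ∀ m, m ≤ i + 1 → Y.1.getVert m = W.1.getVert m := fun m hm => by
    simp [Y, hr, hm]
  have hYX : ∀ m, i + 1 < m → Y.1.getVert m = X.1.getVert m := fun m hm => by
    simp [Y, hr, show ¬m ≤ i + 1 by omega]
  refine ⟨Y, diffAt_iff.mpr ⟨?_, fun j hj => ?_⟩, diffAt_iff.mpr ⟨?_, fun j hj => ?_⟩,
    fun h => ?_⟩
  · rw [hYX k (by omega), ← hW.2 k (by omega)]
    exact Ne.symm hX.1
  · by_cases hji : j ≤ i + 1
    · exact hYW j hji
    · rw [hYX j (by omega), ← hX.2 j hj, hW.2 j (by omega)]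
  · rw [hYW i (by omega), ← hX.2 i (by omega)]
    exact Ne.symm hW.1
  · by_cases hji : j ≤ i + 1
    · rw [hYW j hji, ← hW.2 j hj, hX.2 j (by omega)]
    · exact hYX j (by omega)
  · exact hW.1 (by rw [← h, hYW i (by omega)])

end DiffAt

namespace SPG

variable {V : Type*} {G : SimpleGraph V} {a b : V}

theorem not_add_two_le_of_isAcyclic (hS : (SPG G a b).IsAcyclic) {U W X : Geodesic G a b}
    {i k : ℕ} (hWX : W ≠ X) (hW : DiffAt U W i) (hX : DiffAt U X k) : ¬i + 2 ≤ k := by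
  intro hik
  obtain ⟨Y, hYW, hYX, hYU⟩ := hW.exists_diffAt_diffAt_of_add_two_le hX hik
  exact hYU (hS.eq_of_adj_of_adj hWX ⟨k, hYW⟩ ⟨i, hYX⟩ ⟨i, hW⟩ ⟨k, hX⟩)

theorem succ_eq_or_of_isAcyclic (hS : (SPG G a b).IsAcyclic) {U W X : Geodesic G a b}
    {i k : ℕ} (hWX : W ≠ X) (hW : DiffAt U W i) (hX : DiffAt U X k) :
    i + 1 = k ∨ k + 1 = i := by
  have hik : i ≠ k := by
    rintro rfl
    exact hS.not_adj_of_adj_of_adj ⟨i, hW⟩ ⟨i, hX⟩ ⟨i, hW.diffAt_of_ne hX hWX⟩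
  have := not_add_two_le_of_isAcyclic hS hWX hW hX
  have := not_add_two_le_of_isAcyclic hS hWX.symm hX hW
  omega

theorem degreeLeTwo_of_isAcyclic (hS : (SPG G a b).IsAcyclic) : (SPG G a b).DegreeLeTwo := by
  rintro U W X Z ⟨i, hW⟩ ⟨j, hX⟩ ⟨k, hZ⟩
  by_contra! hne
  have := succ_eq_or_of_isAcyclic hS hne.1 hW hX
  have := succ_eq_or_of_isAcyclic hS hne.2.1 hW hZ
  have := succ_eq_or_of_isAcyclic hS hne.2.2 hX hZ
  omega

end SPG

namespace SimpleGraph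

variable {V : Type*} {G : SimpleGraph V}

def Walk.IsLongestPath {u v : V} (P : G.Walk u v) : Prop :=
  P.IsPath ∧ ∀ ⦃u' v' : V⦄ (Q : G.Walk u' v'), Q.IsPath → Q.length ≤ P.length

theorem exists_isLongestPath [Finite V] [Nonempty V] :
    ∃ (u v : V) (P : G.Walk u v), P.IsLongestPath := by
  have := Fintype.ofFinite V
  let S : Set ℕ := {n | ∃ (u v : V) (P : G.Walk u v), P.IsPath ∧ P.length = n}
  have hne : S.Nonempty := ⟨0, Classical.arbitrary V, _, Walk.nil, Walk.IsPath.nil, rfl⟩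
  have hbdd : BddAbove S :=
    ⟨Fintype.card V, by rintro _ ⟨u, v, P, hP, rfl⟩; exact hP.length_lt.le⟩
  obtain ⟨u, v, P, hP, hlen⟩ := Nat.sSup_mem hne hbdd
  exact ⟨u, v, P, hP, fun u' v' Q hQ => hlen ▸ le_csSup hbdd ⟨u', v', Q, hQ, rfl⟩⟩

namespace Walk.IsLongestPath

variable {u v : V} {P : G.Walk u v}

theorem reverse (hP : P.IsLongestPath) : P.reverse.IsLongestPath :=
  ⟨hP.1.reverse, by simpa using hP.2⟩

theorem mem_support_of_adj_start (hP : P.IsLongestPath) {x : V} (h : G.Adj u x) :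
    x ∈ P.support := by
  by_contra hx
  have := hP.2 (Walk.cons h.symm P) (hP.1.cons hx)
  simp at this

theorem mem_support_of_adj_end (hP : P.IsLongestPath) {x : V} (h : G.Adj v x) :
    x ∈ P.support := by
  simpa using hP.reverse.mem_support_of_adj_start h

theorem mem_support_of_adj (hG : G.DegreeLeTwo) (hP : P.IsLongestPath) {x y : V}
    (hx : x ∈ P.support) (h : G.Adj x y) : y ∈ P.support := by
  obtain ⟨n, rfl, hn⟩ := Walk.mem_support_iff_exists_getVert.mp hx
  rcases Nat.eq_zero_or_pos n with rfl | hn0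
  · exact hP.mem_support_of_adj_start (by simpa using h)
  rcases hn.eq_or_lt with rfl | hnl
  · exact hP.mem_support_of_adj_end (by simpa using h)
  by_contra hy
  have hprev : G.Adj (P.getVert n) (P.getVert (n - 1)) := by
    simpa [Nat.sub_add_cancel hn0] using (P.adj_getVert_succ (i := n - 1) (by omega)).symm
  rcases hG hprev (P.adj_getVert_succ hnl) h with heq | heq | heq
  · have := hP.1.getVert_injOn (by simp; omega) (by simp; omega) heq
    omega
  · exact hy (heq ▸ P.getVert_mem_support _)
  · exact hy (heq ▸ P.getVert_mem_support _)

end Walk.IsLongestPath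

theorem IsTree.nonempty_iso_pathGraph [Finite V] (hG : G.IsTree) (hdeg : G.DegreeLeTwo) :
    ∃ n, Nonempty (G ≃g pathGraph n) := by
  classical
  have := hG.connected.nonempty
  obtain ⟨u, v, P, hP⟩ := exists_isLongestPath (G := G)
  have hsupp : ∀ z, z ∈ P.support := hG.connected.preconnected.mem_of_forall_adj
    P.start_mem_support fun x y hx h => hP.mem_support_of_adj hdeg hx h
  have hadj : ∀ {x y : V}, P.toSubgraph.spanningCoe.Adj x y ↔ G.Adj x y := fun {x y} =>
    Walk.adj_toSubgraph_iff_mem_edges.trans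
      ⟨P.adj_of_mem_edges, hG.isAcyclic.mem_edges_of_mem_support P (hsupp x) (hsupp y)⟩
  let eP : P.toSubgraph.spanningCoe ≃g G := ⟨Equiv.refl V, hadj.symm⟩
  have hspan : P.toSubgraph.IsSpanning := fun z => P.mem_verts_toSubgraph.mpr (hsupp z)
  exact ⟨P.length + 1, ⟨(hP.1.pathGraphIsoToSubgraph.trans
    (P.toSubgraph.spanningCoeEquivCoeOfSpanning hspan).symm |>.trans eP).symm⟩⟩

end SimpleGraph

theorem stmt15 {α : Type*} [Fintype α] (H : SimpleGraph α) (htree : H.IsTree)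
    (h : IsSPGraph H) : ∃ n, Nonempty (H ≃g pathGraph n) := by
  obtain ⟨V, G, a, b, -, ⟨e⟩⟩ := h
  have hS : (SPG G a b).IsAcyclic := e.isAcyclic_iff.mp htree.isAcyclic
  exact htree.nonempty_iso_pathGraph ((SPG.degreeLeTwo_of_isAcyclic hS).of_embedding e.toEmbedding)
end
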